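/- Let m ≥ 1 be an integer and let B be a subset of the cells of the m × m square grid such that no row of the grid is entirely contained in B, but at least one column of the grid is entirely contained in B. Then |∂B| ≥ m. -/

import Mathlib

/-- The cells of the `m × m` square grid: pairs `(i, j)` with `1 ≤ i, j ≤ m`. -/
def gridCells (m : ℕ) : Finset (ℕ × ℕ) := (Finset.Icc 1 m) ×ˢ (Finset.Icc 1 m)

/-- Two cells are adjacent if they agree in one coordinate and differ by exactly `1`
in the other (i.e. they share a side). -/
def adjacent (c c' : ℕ × ℕ) : Prop :=
  (c.1 = c'.1 ∧ (c.2 + 1 = c'.2 ∨ c'.2 + 1 = c.2)) ∨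
  (c.2 = c'.2 ∧ (c.1 + 1 = c'.1 ∨ c'.1 + 1 = c.1))

-- The boundary `∂B` of a set `B` of cells: all cells (of the grid) not in `B` that are
-- adjacent to some cell of `B`.
open Classical in
noncomputable def gridBoundary (m : ℕ) (B : Finset (ℕ × ℕ)) : Finset (ℕ × ℕ) :=
  (gridCells m).filter (fun c => c ∉ B ∧ ∃ c' ∈ B, adjacent c c')

/-! In each row, walking from the cell of the full column (in `B`) to a cell outside `B`, one
meets a cell outside `B` next to a cell of `B`, i.e. a cell of `∂B`. These cells lie in
distinct rows, so there are at least `m` of them. -/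

open Finset

theorem Nat.exists_le_lt_and_not_succ {p : ℕ → Prop} {a b : ℕ} (hab : a ≤ b) (ha : p a)
    (hb : ¬p b) : ∃ k, a ≤ k ∧ k < b ∧ p k ∧ ¬p (k + 1) := by
  induction b, hab using Nat.le_induction with
  | base => exact absurd ha hb
  | succ b hab ih =>
    by_cases hpb : p b
    · exact ⟨b, hab, b.lt_succ_self, hpb, hb⟩
    · obtain ⟨k, hak, hkb, hk⟩ := ih hpb
      exact ⟨k, hak, hkb.trans b.lt_succ_self, hk⟩

theorem mem_gridBoundary {m : ℕ} {B : Finset (ℕ × ℕ)} {c : ℕ × ℕ} :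
    c ∈ gridBoundary m B ↔ c ∈ gridCells m ∧ c ∉ B ∧ ∃ c' ∈ B, adjacent c c' := by
  simp only [gridBoundary, mem_filter]

theorem exists_mem_gridBoundary_of_mem_of_not_mem {m : ℕ} {B : Finset (ℕ × ℕ)} {i a b : ℕ}
    (hi : i ∈ Icc 1 m) (ha : a ∈ Icc 1 m) (hb : b ∈ Icc 1 m) (haB : (i, a) ∈ B)
    (hbB : (i, b) ∉ B) : ∃ j, (i, j) ∈ gridBoundary m B := by
  simp only [mem_Icc] at ha hb
  rcases le_total a b with hab | hba
  · obtain ⟨k, hak, hkb, hkB, hk1B⟩ :=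
      Nat.exists_le_lt_and_not_succ (p := fun j => (i, j) ∈ B) hab haB hbB
    refine ⟨k + 1, mem_gridBoundary.2 ⟨?_, hk1B, (i, k), hkB, Or.inl ⟨rfl, Or.inr rfl⟩⟩⟩
    simp only [gridCells, mem_product, mem_Icc] at hi ⊢
    omega
  · obtain ⟨k, hbk, hka, hkB, hk1B⟩ :=
      Nat.exists_le_lt_and_not_succ (p := fun j => (i, j) ∉ B) hba hbB (not_not.2 haB)
    refine ⟨k, mem_gridBoundary.2 ⟨?_, hkB, (i, k + 1), not_not.1 hk1B,
      Or.inl ⟨rfl, Or.inl rfl⟩⟩⟩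
    simp only [gridCells, mem_product, mem_Icc] at hi ⊢
    omega

theorem boundary_card_ge_m_of_no_black_row_some_black_col_general (m : ℕ)
    (B : Finset (ℕ × ℕ))
    (hrow : ∀ i ∈ Finset.Icc 1 m, ∃ j ∈ Finset.Icc 1 m, (i, j) ∉ B)
    (hcol : ∃ j ∈ Finset.Icc 1 m, ∀ i ∈ Finset.Icc 1 m, (i, j) ∈ B) :
    (gridBoundary m B).card ≥ m := by
  obtain ⟨a, ha, hcolB⟩ := hcol
  have hrows : Icc 1 m ⊆ (gridBoundary m B).image Prod.fst := fun i hi => by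
    obtain ⟨b, hb, hbB⟩ := hrow i hi
    obtain ⟨j, hj⟩ := exists_mem_gridBoundary_of_mem_of_not_mem hi ha hb (hcolB i hi) hbB
    exact mem_image.2 ⟨(i, j), hj, rfl⟩
  calc m = #(Icc 1 m) := by simp
    _ ≤ #((gridBoundary m B).image Prod.fst) := card_le_card hrows
    _ ≤ #(gridBoundary m B) := card_image_le

theorem boundary_card_ge_m_of_no_black_row_some_black_col (m : ℕ) (hm : 1 ≤ m)
    (B : Finset (ℕ × ℕ)) (hB : B ⊆ gridCells m)
    (hrow : ∀ i ∈ Finset.Icc 1 m, ∃ j ∈ Finset.Icc 1 m, (i, j) ∉ B)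
    (hcol : ∃ j ∈ Finset.Icc 1 m, ∀ i ∈ Finset.Icc 1 m, (i, j) ∈ B) :
    (gridBoundary m B).card ≥ m :=
  boundary_card_ge_m_of_no_black_row_some_black_col_general m B hrow hcol
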